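/- (Hilbert's Nullstellensatz over quaternions, one variable) A polynomial F ∈ ℍ[x] satisfies F(p) = 0 for every p in the zero locus 𝓥(I) of a left ideal I of ℍ[x] if and only if for every a ∈ ℍ there exists a natural number N ≥ 1 such that (aF)^N ∈ I + I·(aF) + I·(aF)² + ⋯ + I·(aF)^N. -/

import Mathlib

/-!
The tool throughout is the evaluation rule `(P Q)(x) = P(y) Q(x)` whenever `Q(x) x = y Q(x)`.

Let `J = I + I F + I F² + ⋯`. It is a left ideal with `J F ⊆ J`, so either `J = 0`, and then `F`
vanishes on all of `ℍ` and is zero, or `J = ℍ[X] D` with `D` monic, `D F = F₁ D`, and every root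
of `D` lies in `𝓥(I)`, hence is a root of `F`. Such a pair satisfies `F^N ∈ ℍ[X] D`, by induction
on `deg D`. If `D` has a factor `charPoly w = X² - 2 Re(w) X + |w|²`, then `D` and `F` have a
common real (hence central) factor, which is cancelled. Otherwise write `D = D₁ (X - p)` for a root
`p` of `D` (Niven) and `F = G (X - p)`; then `D₁ ((X - p) G) = F₁ D₁`, and every root `q` of `D₁`
is a root of `(X - p) G`, so by induction `((X - p) G)^N = Q D₁` and
`F^(N+1) = G ((X - p) G)^N (X - p) = G Q D`. As for the roots: if `p` is not conjugate to `q`, the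
root `q` of `D₁` lifts to a root `w` of `D` with `F(w) = G(q) u`, `u ≠ 0`. If it is, evaluating
`D₁ ((X - p) G) = F₁ D₁` at `q` shows that `((X - p) G)(q)` commutes with `q`, while the
factorisation `charPoly q = (X - p') (X - p)` shows that it intertwines `q` and `p' ≠ q`; so it
vanishes.

Conversely, for `a = conj F(p)` the value `(a F)(p) = |F(p)|²` is real, so evaluating
`(a F)^N = ∑ Gₘ (a F)^m` at `p ∈ 𝓥(I)` gives `|F(p)|^{2N} = 0`.
-/

open Polynomial MulOpposite

local notation "ℍ" => Quaternion ℝ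

namespace Polynomial

section Ring

variable {R : Type*} [Ring R]

theorem eval_mul_of_semiconjBy {P Q : R[X]} {x y : R} (h : SemiconjBy (Q.eval x) x y) :
    (P * Q).eval x = P.eval y * Q.eval x := by
  induction P using Polynomial.induction_on' with
  | add a b ha hb => rw [add_mul, eval_add, ha, hb, eval_add, add_mul]
  | monomial k a =>
    rw [← C_mul_X_pow_eq_monomial, mul_assoc, X_pow_mul, eval_C_mul, eval_mul_X_pow, eval_C_mul,
      eval_X_pow, mul_assoc, (h.pow_right k).eq]

theorem eval_mul_eq_zero_of_eval_eq_zero (P : R[X]) {Q : R[X]} {x : R} (h : Q.eval x = 0) :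
    (P * Q).eval x = 0 := by
  rw [eval_mul_of_semiconjBy (y := x) (h ▸ SemiconjBy.zero_left x x), h, mul_zero]

theorem eval_pow_of_commute {P : R[X]} {x : R} (h : Commute (P.eval x) x) (n : ℕ) :
    (P ^ n).eval x = P.eval x ^ n := by
  induction n with
  | zero => simp
  | succ n ih => rw [pow_succ, eval_mul_of_semiconjBy h, ih, pow_succ]

theorem eval_X_sub_C_mul (a : R) (P : R[X]) (x : R) :
    ((X - C a) * P).eval x = P.eval x * x - a * P.eval x := by
  rw [sub_mul, (commute_X P).eq, eval_sub, eval_mul_X, eval_C_mul]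

theorem X_sub_C_mul_X_sub_C (a b : R) :
    (X - C a) * (X - C b) = X ^ 2 - C (a + b) * X + C (a * b) := by
  rw [sub_mul, mul_sub, mul_sub, (commute_X (C b)).eq, C_add, C_mul, sq]
  noncomm_ring

theorem eval_eq_zero_of_pow_eq_sum [NoZeroDivisors R] {P : R[X]} {x : R}
    (hx : Commute (P.eval x) x) {N : ℕ} (hN : N ≠ 0) {G : Fin (N + 1) → R[X]}
    (hG : ∀ m, (G m).eval x = 0) (h : P ^ N = ∑ m : Fin (N + 1), G m * P ^ (m : ℕ)) :
    P.eval x = 0 := by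
  refine (pow_eq_zero_iff hN).mp ?_
  rw [← eval_pow_of_commute hx, h, eval_finsetSum]
  refine Finset.sum_eq_zero fun m _ => ?_
  have hm : Commute ((P ^ (m : ℕ)).eval x) x := eval_pow_of_commute hx m ▸ hx.pow_left m
  rw [eval_mul_of_semiconjBy hm, hG m, zero_mul]

theorem exists_eq_mul_add_of_monic [Nontrivial R] (P : R[X]) {D : R[X]} (hD : D.Monic) :
    ∃ Q S : R[X], P = Q * D + S ∧ S.degree < D.degree := by
  let e := opRingEquiv R
  have he : ∀ M, (e M).degree = (unop M).degree := fun M => by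
    simp only [degree, e, support_opRingEquiv]
  have hD' : (e (op D)).Monic := by
    rw [Monic, leadingCoeff_opRingEquiv, unop_op, hD.leadingCoeff, op_one]
  refine ⟨unop (e.symm (e (op P) /ₘ e (op D))), unop (e.symm (e (op P) %ₘ e (op D))), ?_, ?_⟩
  · apply op_injective
    apply e.injective
    rw [op_add, op_mul, op_unop, op_unop, map_add, map_mul, e.apply_symm_apply,
      e.apply_symm_apply, add_comm]
    exact (modByMonic_add_div _ _).symm
  · rw [← he, e.apply_symm_apply, ← unop_op D, ← he]
    exact degree_modByMonic_lt _ hD'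

theorem exists_eq_mul_X_sub_C_of_eval_eq_zero [Nontrivial R] {P : R[X]} {a : R}
    (h : P.eval a = 0) : ∃ Q, P = Q * (X - C a) := by
  obtain ⟨Q, S, rfl, hS⟩ := exists_eq_mul_add_of_monic P (monic_X_sub_C a)
  rw [degree_X_sub_C] at hS
  obtain ⟨c, rfl⟩ : ∃ c, S = C c := ⟨_, eq_C_of_degree_le_zero (Order.le_of_lt_succ hS)⟩
  rw [eval_add, eval_mul_X_sub_C, zero_add, eval_C] at h
  exact ⟨Q, by rw [h, C_0, add_zero]⟩

end Ring

theorem commute_map_algebraMap {K A : Type*} [CommSemiring K] [Semiring A] [Algebra K A]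
    (n : K[X]) (P : A[X]) : Commute (n.map (algebraMap K A)) P := by
  induction n using Polynomial.induction_on' with
  | add a b ha hb => rw [Polynomial.map_add]; exact ha.add_left hb
  | monomial k a =>
    rw [map_monomial, ← C_mul_X_pow_eq_monomial, ← algebraMap_apply]
    exact (Algebra.commute_algebraMap_left a P).mul_left (commute_X_pow P k)

section DivisionRing

variable {K : Type*} [DivisionRing K]

theorem eval_mul_of_eval_ne_zero {P Q : K[X]} {x : K} (h : Q.eval x ≠ 0) :
    (P * Q).eval x = P.eval (Q.eval x * x * (Q.eval x)⁻¹) * Q.eval x :=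
  eval_mul_of_semiconjBy (inv_mul_cancel_right₀ h _).symm

theorem exists_monic_mem_natDegree_eq {J : Ideal K[X]} {P : K[X]} (hP : P ∈ J) (h0 : P ≠ 0) :
    ∃ D ∈ J, D.Monic ∧ D.natDegree = P.natDegree := by
  have hc : P.leadingCoeff⁻¹ ≠ 0 := inv_ne_zero (leadingCoeff_ne_zero.mpr h0)
  refine ⟨C P.leadingCoeff⁻¹ * P, J.mul_mem_left _ hP, ?_, natDegree_C_mul hc⟩
  exact monic_C_mul_of_mul_leadingCoeff_eq_one (inv_mul_cancel₀ (leadingCoeff_ne_zero.mpr h0))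

theorem exists_monic_eq_span {J : Ideal K[X]} (hJ : J ≠ ⊥) :
    ∃ D : K[X], D.Monic ∧ J = Ideal.span {D} := by
  classical
  obtain ⟨P, hPJ, hP0⟩ := Submodule.exists_mem_ne_zero_of_ne_bot hJ
  have hex : ∃ d, ∃ D ∈ J, D.Monic ∧ D.natDegree = d :=
    ⟨_, exists_monic_mem_natDegree_eq hPJ hP0⟩
  obtain ⟨D, hDJ, hD, hDd⟩ := Nat.find_spec hex
  refine ⟨D, hD, le_antisymm (fun P hP => ?_) ((Ideal.span_singleton_le_iff_mem J).mpr hDJ)⟩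
  obtain ⟨Q, S, rfl, hS⟩ := exists_eq_mul_add_of_monic P hD
  have hSJ : S ∈ J := by simpa using J.sub_mem hP (J.mul_mem_left Q hDJ)
  obtain rfl : S = 0 := by
    by_contra hS0
    obtain ⟨E, hEJ, hE, hEd⟩ := exists_monic_mem_natDegree_eq hSJ hS0
    refine Nat.find_min hex ?_ ⟨E, hEJ, hE, rfl⟩
    rw [hEd, ← hDd]
    exact natDegree_lt_natDegree hS0 hS
  exact Ideal.mem_span_singleton'.mpr ⟨Q, (add_zero _).symm⟩

end DivisionRing

section Star

variable {S : Type*} [Semiring S] [StarRing S]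

/-- Coefficientwise `star`, routed through `Sᵐᵒᵖ[X]` so that it is visibly anti-multiplicative. -/
noncomputable instance instStar : Star S[X] where
  star P := unop ((opRingEquiv S).symm (P.map (starRingEquiv : S ≃+* Sᵐᵒᵖ).toRingHom))

@[simp]
theorem coeff_star (P : S[X]) (n : ℕ) : (star P).coeff n = star (P.coeff n) := by
  have h := coeff_opRingEquiv
    ((opRingEquiv S).symm (P.map (starRingEquiv : S ≃+* Sᵐᵒᵖ).toRingHom)) n
  rw [RingEquiv.apply_symm_apply, coeff_map] at h
  exact (congrArg unop h).symm

noncomputable instance instStarRing : StarRing S[X] where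
  star_involutive P := ext fun n => by simp
  star_mul P Q := by
    change unop (_ : S[X]ᵐᵒᵖ) = unop _ * unop _
    rw [Polynomial.map_mul, map_mul, unop_mul]
  star_add P Q := ext fun n => by simp [star_add]

@[simp]
theorem star_C (a : S) : star (C a) = C (star a) :=
  ext fun n => by simp [coeff_C, apply_ite star]

@[simp]
theorem star_X : star (X : S[X]) = X :=
  ext fun n => by simp [coeff_X, apply_ite star]

end Star

end Polynomial

namespace Ideal

variable {A : Type*} [Semiring A]

/-- `I + I F + I F² + ⋯`, as the values at `F` of the polynomials with coefficients in `I`. -/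
def mulPowers (I : Ideal A) (F : A) : Ideal A where
  carrier := {P | ∃ c : A[X], (∀ k, c.coeff k ∈ I) ∧ c.eval F = P}
  add_mem' := by
    rintro _ _ ⟨c, hc, rfl⟩ ⟨d, hd, rfl⟩
    exact ⟨c + d, fun k => by simpa using I.add_mem (hc k) (hd k), eval_add⟩
  zero_mem' := ⟨0, fun k => by simp, eval_zero⟩
  smul_mem' := by
    rintro a _ ⟨c, hc, rfl⟩
    exact ⟨C a * c, fun k => by simpa using I.mul_mem_left a (hc k), eval_C_mul⟩

variable {I : Ideal A} {F : A}

theorem le_mulPowers : I ≤ I.mulPowers F :=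
  fun G hG => ⟨C G, fun k => by cases k <;> simp [hG], eval_C⟩

theorem mul_mem_mulPowers {P : A} (hP : P ∈ I.mulPowers F) : P * F ∈ I.mulPowers F := by
  obtain ⟨c, hc, rfl⟩ := hP
  exact ⟨c * X, fun k => by cases k <;> simp [hc], eval_mul_X⟩

theorem exists_eval_eq_sum {c : A[X]} (hc : ∀ k, c.coeff k ∈ I) {N : ℕ}
    (hN : c.natDegree ≤ N) :
    ∃ G : Fin (N + 1) → A, (∀ m, G m ∈ I) ∧ c.eval F = ∑ m : Fin (N + 1), G m * F ^ (m : ℕ) :=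
  ⟨fun m => c.coeff m, fun m => hc m, by
    rw [eval_eq_sum_range' (Nat.lt_succ_of_le hN)]
    exact (Fin.sum_univ_eq_sum_range (fun k => c.coeff k * F ^ k) _).symm⟩

end Ideal

namespace QuaternionPolynomial

open Quaternion (normSq)

noncomputable def realCharPoly (q : ℍ) : ℝ[X] :=
  X ^ 2 - C (2 * q.re) * X + C (normSq q)

/-- Its roots are the conjugates of `q`, i.e. the quaternions with the real part and norm
of `q`. -/
noncomputable def charPoly (q : ℍ) : ℍ[X] :=
  (realCharPoly q).map (algebraMap ℝ ℍ)

theorem monic_realCharPoly (q : ℍ) : (realCharPoly q).Monic := by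
  unfold realCharPoly
  monicity!

theorem natDegree_realCharPoly (q : ℍ) : (realCharPoly q).natDegree = 2 := by
  unfold realCharPoly
  compute_degree!

theorem monic_charPoly (q : ℍ) : (charPoly q).Monic :=
  (monic_realCharPoly q).map _

theorem degree_charPoly (q : ℍ) : (charPoly q).degree = 2 := by
  rw [charPoly, degree_map, degree_eq_natDegree (monic_realCharPoly q).ne_zero,
    natDegree_realCharPoly]
  rfl

theorem charPoly_eq (q : ℍ) :
    charPoly q = X ^ 2 - C ((2 * q.re : ℝ) : ℍ) * X + C ((normSq q : ℝ) : ℍ) := by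
  simp [charPoly, realCharPoly]

theorem commute_charPoly (q : ℍ) (P : ℍ[X]) : Commute (charPoly q) P :=
  commute_map_algebraMap _ P

theorem star_charPoly (q : ℍ) : star (charPoly q) = charPoly q :=
  ext fun n => by simp [charPoly]

theorem charPoly_star (q : ℍ) : charPoly (star q) = charPoly q := by
  rw [charPoly, realCharPoly, Quaternion.re_star, Quaternion.normSq_star]
  rfl

theorem eval_charPoly (q v : ℍ) :
    (charPoly q).eval v = v * v - ((2 * q.re : ℝ) : ℍ) * v + ((normSq q : ℝ) : ℍ) := by
  simp [charPoly_eq, sq]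

theorem eval_charPoly_self (q : ℍ) : (charPoly q).eval q = 0 := by
  rw [eval_charPoly, ← Quaternion.self_add_star', ← Quaternion.self_mul_star, add_mul,
    ← star_comm_self']
  abel

theorem eval_charPoly_star (q : ℍ) : (charPoly q).eval (star q) = 0 := by
  rw [← charPoly_star, eval_charPoly_self]

theorem charPoly_eq_mul {q p : ℍ} (hp : (charPoly q).eval p = 0) :
    charPoly q = (X - C (((2 * q.re : ℝ) : ℍ) - p)) * (X - C p) := by
  have hsp : (((2 * q.re : ℝ) : ℍ) - p) * p = ((normSq q : ℝ) : ℍ) := by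
    rw [eval_charPoly] at hp
    rw [sub_mul, ← sub_eq_zero, ← neg_eq_zero, ← hp]
    abel
  rw [X_sub_C_mul_X_sub_C, sub_add_cancel, hsp, charPoly_eq]

theorem exists_eq_mul_charPoly_add (q : ℍ) (P : ℍ[X]) :
    ∃ (W : ℍ[X]) (α β : ℍ), P = W * charPoly q + (C α * X + C β) := by
  obtain ⟨W, S, rfl, hS⟩ := exists_eq_mul_add_of_monic P (monic_charPoly q)
  rw [degree_charPoly] at hS
  exact ⟨W, _, _, by rw [← eq_X_add_C_of_degree_le_one (Order.le_of_lt_succ hS)]⟩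

theorem eval_mul_charPoly_add {q v : ℍ} (hv : (charPoly q).eval v = 0) (W : ℍ[X]) (α β : ℍ) :
    (W * charPoly q + (C α * X + C β)).eval v = α * v + β := by
  simp [eval_mul_eq_zero_of_eval_eq_zero W hv]

theorem charPoly_dvd_of_eval_eq_zero {q : ℍ} (hq : star q ≠ q) {P : ℍ[X]}
    (h₁ : P.eval q = 0) (h₂ : P.eval (star q) = 0) : charPoly q ∣ P := by
  obtain ⟨W, α, β, rfl⟩ := exists_eq_mul_charPoly_add q P
  rw [eval_mul_charPoly_add (eval_charPoly_self q)] at h₁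
  rw [eval_mul_charPoly_add (eval_charPoly_star q)] at h₂
  obtain rfl : α = 0 := by
    have : α * (q - star q) = 0 := by linear_combination (norm := noncomm_ring) h₁ - h₂
    exact (mul_eq_zero.mp this).resolve_right (sub_ne_zero.mpr hq.symm)
  obtain rfl : β = 0 := by simpa using h₁
  exact ⟨W, by simp [(commute_charPoly q W).eq]⟩

theorem eval_star_coe (P : ℍ[X]) (r : ℝ) : (star P).eval (r : ℍ) = star (P.eval (r : ℍ)) := by
  induction P using Polynomial.induction_on' with
  | add a b ha hb => rw [star_add, eval_add, eval_add, ha, hb, star_add]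
  | monomial k a =>
    rw [← C_mul_X_pow_eq_monomial, star_mul, star_pow, star_X, star_C, (commute_X_pow _ k).eq,
      eval_C_mul, eval_C_mul, eval_X_pow, star_mul, star_pow, Quaternion.star_coe,
      ((Quaternion.coe_commute r _).pow_left k).eq]

theorem eval_map_coe (N : ℝ[X]) (r : ℝ) :
    (N.map (algebraMap ℝ ℍ)).eval (r : ℍ) = ((N.eval r : ℝ) : ℍ) := by
  simpa [Quaternion.algebraMap_def] using aeval_algebraMap_apply_eq_algebraMap_eval (A := ℍ) r N

theorem exists_map_eq_mul_star (P : ℍ[X]) :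
    ∃ N : ℝ[X], N.map (algebraMap ℝ ℍ) = P * star P := by
  refine (mem_lifts _).mp ((lifts_iff_coeff_lifts _).mpr fun n => ⟨((P * star P).coeff n).re, ?_⟩)
  have h : star ((P * star P).coeff n) = (P * star P).coeff n := by
    rw [← coeff_star, star_mul, star_star]
  rw [Quaternion.algebraMap_def, ← Quaternion.star_eq_self.mp h]

theorem eval_eq_zero_iff_of_map_eq_mul_star {P : ℍ[X]} {N : ℝ[X]}
    (hN : N.map (algebraMap ℝ ℍ) = P * star P) (r : ℝ) :
    N.eval r = 0 ↔ P.eval (r : ℍ) = 0 := by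
  have h : ((N.eval r : ℝ) : ℍ) = P.eval (r : ℍ) * star (P.eval (r : ℍ)) := by
    rw [← eval_map_coe, hN, eval_mul_of_semiconjBy (Quaternion.coe_commute r _).symm,
      eval_star_coe]
  rw [← Quaternion.coe_inj (R := ℝ), Quaternion.coe_zero, h, mul_eq_zero, star_eq_zero, or_self]

theorem eq_zero_of_forall_eval_eq_zero {P : ℍ[X]} (h : ∀ v, P.eval v = 0) : P = 0 := by
  obtain ⟨N, hN⟩ := exists_map_eq_mul_star P
  have hN0 : N = 0 := Polynomial.funext fun r => by
    rw [eval_zero, eval_eq_zero_iff_of_map_eq_mul_star hN]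
    exact h r
  rwa [hN0, Polynomial.map_zero, eq_comm, mul_eq_zero, star_eq_zero, or_self] at hN

theorem exists_eval_eq_zero_of_charPoly_dvd {q : ℍ} (hq : star q ≠ q) {P : ℍ[X]}
    (h : charPoly q ∣ P * star P) : ∃ v, P.eval v = 0 := by
  by_cases hs : (star P).eval q = 0 ∧ (star P).eval (star q) = 0
  · obtain ⟨H, hH⟩ := charPoly_dvd_of_eval_eq_zero hq hs.1 hs.2
    refine ⟨q, ?_⟩
    rw [← star_star P, hH, star_mul, star_charPoly]
    exact eval_mul_eq_zero_of_eval_eq_zero _ (eval_charPoly_self q)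
  obtain ⟨v, hv, hc⟩ : ∃ v, (charPoly q).eval v = 0 ∧ (star P).eval v ≠ 0 := by
    rcases not_and_or.mp hs with hs | hs
    exacts [⟨q, eval_charPoly_self q, hs⟩, ⟨star q, eval_charPoly_star q, hs⟩]
  refine ⟨(star P).eval v * v * ((star P).eval v)⁻¹, (mul_eq_zero.mp ?_).resolve_right hc⟩
  obtain ⟨M, hM⟩ := h
  rw [← eval_mul_of_eval_ne_zero hc, hM, (commute_charPoly q M).eq]
  exact eval_mul_eq_zero_of_eval_eq_zero M hv

/-- Niven's theorem. -/
theorem exists_eval_eq_zero {P : ℍ[X]} (hP : 0 < P.natDegree) : ∃ v, P.eval v = 0 := by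
  obtain ⟨N, hN⟩ := exists_map_eq_mul_star P
  have hP0 : P ≠ 0 := ne_zero_of_natDegree_gt hP
  have hN0 : N.natDegree ≠ 0 := by
    rw [← natDegree_map_eq_of_injective (algebraMap ℝ ℍ).injective, hN,
      natDegree_mul hP0 (star_ne_zero.mpr hP0)]
    omega
  obtain ⟨z, hz⟩ := IsAlgClosed.exists_aeval_eq_zero ℂ N
    fun h => hN0 (natDegree_eq_of_degree_eq_some h)
  by_cases hzi : z.im = 0
  · refine ⟨z.re, (eval_eq_zero_iff_of_map_eq_mul_star hN z.re).mp ?_⟩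
    have hzr : z = algebraMap ℝ ℂ z.re := Complex.ext rfl (by simp [hzi])
    rwa [hzr, aeval_algebraMap_apply_eq_algebraMap_eval,
      map_eq_zero_iff _ (algebraMap ℝ ℂ).injective] at hz
  · let q : ℍ := ⟨z.re, z.im, 0, 0⟩
    refine exists_eval_eq_zero_of_charPoly_dvd (q := q) (fun h => hzi ?_) ?_
    · simpa [q] using congrArg QuaternionAlgebra.imI (Quaternion.star_eq_self.mp h)
    · have hq : realCharPoly q = X ^ 2 - C (2 * z.re) * X + C (‖z‖ ^ 2) := by
        rw [realCharPoly, Quaternion.normSq_def', Complex.sq_norm, Complex.normSq_apply]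
        simp only [q]
        ring_nf
      rw [← hN, charPoly, hq]
      exact Polynomial.map_dvd _ (quadratic_dvd_of_aeval_eq_zero_im_ne_zero N hz hzi)

theorem exists_eval_mul_X_sub_C_eq {q p : ℍ} (hp : (charPoly q).eval p ≠ 0) :
    ∃ w u : ℍ, u ≠ 0 ∧ ∀ P : ℍ[X], (P * (X - C p)).eval w = P.eval q * u := by
  have ht : star q - p ≠ 0 := fun h0 => hp (sub_eq_zero.mp h0 ▸ eval_charPoly_star q)
  have hq := eval_charPoly_self q
  rw [eval_charPoly] at hq hp
  set s : ℍ := ((2 * q.re : ℝ) : ℍ)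
  set n : ℍ := ((normSq q : ℝ) : ℍ)
  have hs : ∀ x : ℍ, x * s = s * x := fun x => (Quaternion.coe_commutes _ x).symm
  have hn : ∀ x : ℍ, x * n = n * x := fun x => (Quaternion.coe_commutes _ x).symm
  have hqs : star q = s - q := Quaternion.star_eq_two_re_sub q
  generalize htdef : star q - p = t at ht
  -- `w` is conjugate to `q`, and `t w = q t` is the identity `(w - p) w = q (w - p)` in disguise.
  obtain ⟨w, hwdef⟩ : ∃ w, w = t⁻¹ * q * t := ⟨_, rfl⟩
  have hw : t * w = q * t := by rw [hwdef, ← mul_assoc, ← mul_assoc, mul_inv_cancel₀ ht, one_mul]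
  have hww : w * w = s * w - n := by
    calc w * w = t⁻¹ * (q * q) * t := by
          rw [hwdef]
          simp only [mul_assoc, mul_inv_cancel_left₀ ht]
      _ = t⁻¹ * (s * q - n) * t := by
        congr 2
        linear_combination (norm := noncomm_ring) hq
      _ = s * w - n := by
        rw [mul_sub, sub_mul, ← mul_assoc, hs t⁻¹, hn t⁻¹, mul_assoc n, inv_mul_cancel₀ ht,
          mul_one, hwdef]
        simp only [mul_assoc]
  have hu : SemiconjBy ((X - C p).eval w) w q := by
    rw [← htdef, hqs] at hw
    simp only [SemiconjBy, eval_sub, eval_X, eval_C]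
    linear_combination (norm := noncomm_ring) hww + hw - hq + hs q
  refine ⟨w, w - p, fun h0 => hp ?_, fun P => ?_⟩
  · rw [← sub_eq_zero.mp h0, hww]
    abel
  · rw [eval_mul_of_semiconjBy hu]
    simp

theorem eval_X_sub_C_mul_eq_zero_of_eval_charPoly_eq_zero {D₁ F₁ G : ℍ[X]} {p q : ℍ}
    (hinv : D₁ * ((X - C p) * G) = F₁ * D₁) (hq : D₁.eval q = 0)
    (hp : (charPoly q).eval p = 0) (hnd : ¬charPoly q ∣ D₁ * (X - C p)) :
    ((X - C p) * G).eval q = 0 := by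
  obtain ⟨W, α, β, hD₁⟩ := exists_eq_mul_charPoly_add q D₁
  have hβ : β = -(α * q) := by
    rw [hD₁, eval_mul_charPoly_add (eval_charPoly_self q)] at hq
    exact eq_neg_of_add_eq_zero_right hq
  replace hD₁ : D₁ = W * charPoly q + C α * (X - C q) := by
    rw [hD₁, hβ, C_neg, C_mul, mul_sub, sub_eq_add_neg]
  obtain ⟨p', hfac⟩ : ∃ p', charPoly q = (X - C p') * (X - C p) :=
    ⟨((2 * q.re : ℝ) : ℍ) - p, charPoly_eq_mul hp⟩
  have hα : α ≠ 0 := by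
    rintro rfl
    refine hnd ⟨W * (X - C p), ?_⟩
    rw [hD₁, C_0, zero_mul, add_zero, ← mul_assoc, (commute_charPoly q W).eq]
  have hp' : q ≠ p' := by
    rintro rfl
    refine hnd ⟨W * (X - C p) + C α, ?_⟩
    rw [hD₁, add_mul, mul_assoc, mul_assoc, ← hfac, (commute_charPoly q _).eq, mul_add,
      (commute_charPoly q _).eq, (commute_charPoly q (C α)).eq, mul_assoc]
  set c := ((X - C p) * G).eval q
  have hcomm : c * q - q * c = 0 := by
    have := congrArg (eval q) hinv
    rw [eval_mul_eq_zero_of_eval_eq_zero F₁ hq, hD₁, add_mul, eval_add, mul_assoc W,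
      (commute_charPoly q _).eq, ← mul_assoc,
      eval_mul_eq_zero_of_eval_eq_zero _ (eval_charPoly_self q), zero_add, mul_assoc, eval_C_mul,
      eval_X_sub_C_mul] at this
    exact (mul_eq_zero.mp this).resolve_left hα
  have hconj : c * q - p' * c = 0 := by
    have := eval_X_sub_C_mul p' ((X - C p) * G) q
    rwa [← mul_assoc, ← hfac, (commute_charPoly q G).eq,
      eval_mul_eq_zero_of_eval_eq_zero _ (eval_charPoly_self q), eq_comm] at this
  have : (q - p') * c = 0 := by
    linear_combination (norm := noncomm_ring) hconj - hcomm
  exact (mul_eq_zero.mp this).resolve_left (sub_ne_zero.mpr hp')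

theorem eval_X_sub_C_mul_eq_zero_of_eval_charPoly_ne_zero {D₁ G : ℍ[X]} {p q : ℍ}
    (hq : D₁.eval q = 0)
    (hroots : ∀ v, (D₁ * (X - C p)).eval v = 0 → (G * (X - C p)).eval v = 0)
    (hp : (charPoly q).eval p ≠ 0) : ((X - C p) * G).eval q = 0 := by
  obtain ⟨w, u, hu, hw⟩ := exists_eval_mul_X_sub_C_eq hp
  have hG : G.eval q = 0 := by
    have := hroots w (by rw [hw, hq, zero_mul])
    rw [hw] at this
    exact (mul_eq_zero.mp this).resolve_right hu
  rw [eval_X_sub_C_mul, hG, zero_mul, mul_zero, sub_zero]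

theorem eval_X_sub_C_mul_eq_zero {D₁ F₁ G : ℍ[X]} {p q : ℍ}
    (hinv : D₁ * ((X - C p) * G) = F₁ * D₁) (hq : D₁.eval q = 0)
    (hroots : ∀ v, (D₁ * (X - C p)).eval v = 0 → (G * (X - C p)).eval v = 0)
    (hnd : ¬charPoly q ∣ D₁ * (X - C p)) : ((X - C p) * G).eval q = 0 := by
  by_cases hp : (charPoly q).eval p = 0
  exacts [eval_X_sub_C_mul_eq_zero_of_eval_charPoly_eq_zero hinv hq hp hnd,
    eval_X_sub_C_mul_eq_zero_of_eval_charPoly_ne_zero hq hroots hp]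

theorem exists_central_dvd_of_charPoly_dvd {D F : ℍ[X]} {w : ℍ} (hw : charPoly w ∣ D)
    (hroots : ∀ v, D.eval v = 0 → F.eval v = 0) :
    ∃ n : ℝ[X], n.Monic ∧ 0 < n.natDegree ∧
      n.map (algebraMap ℝ ℍ) ∣ D ∧ n.map (algebraMap ℝ ℍ) ∣ F := by
  have hD : ∀ v, (charPoly w).eval v = 0 → D.eval v = 0 := by
    obtain ⟨E, rfl⟩ := hw
    intro v hv
    rw [(commute_charPoly w E).eq]
    exact eval_mul_eq_zero_of_eval_eq_zero E hv
  by_cases hw' : star w = w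
  · have hmap : (X - C w.re).map (algebraMap ℝ ℍ) = X - C w := by
      rw [Polynomial.map_sub, map_X, map_C, Quaternion.algebraMap_def,
        ← Quaternion.star_eq_self.mp hw']
    have hc : ∀ P, Commute (X - C w) P := hmap ▸ commute_map_algebraMap _
    refine ⟨X - C w.re, monic_X_sub_C _, by rw [natDegree_X_sub_C]; norm_num, ?_, ?_⟩ <;>
      rw [hmap]
    · refine dvd_trans ⟨X - C (((2 * w.re : ℝ) : ℍ) - w), ?_⟩ hw
      rw [charPoly_eq_mul (eval_charPoly_self w), (hc _).eq]
    · obtain ⟨G, hG⟩ :=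
        exists_eq_mul_X_sub_C_of_eval_eq_zero (hroots w (hD w (eval_charPoly_self w)))
      exact ⟨G, by rw [hG, (hc G).eq]⟩
  · exact ⟨realCharPoly w, monic_realCharPoly w, by rw [natDegree_realCharPoly]; norm_num, hw,
      charPoly_dvd_of_eval_eq_zero hw' (hroots _ (hD _ (eval_charPoly_self w)))
        (hroots _ (hD _ (eval_charPoly_star w)))⟩

structure IsNullstellensatzPair (D F : ℍ[X]) : Prop where
  monic : D.Monic
  exists_mul_eq : ∃ F₁, D * F = F₁ * D
  eval_eq_zero : ∀ v, D.eval v = 0 → F.eval v = 0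

theorem exists_pow_eq_mul_of_central_dvd {D F : ℍ[X]} (h : IsNullstellensatzPair D F)
    {n : ℝ[X]} (hn : n.Monic) (hn0 : 0 < n.natDegree)
    (hD : n.map (algebraMap ℝ ℍ) ∣ D) (hF : n.map (algebraMap ℝ ℍ) ∣ F)
    (ih : ∀ E, E.natDegree < D.natDegree → IsNullstellensatzPair E F → ∃ N Q, F ^ N = Q * E) :
    ∃ N Q, F ^ N = Q * D := by
  set c := n.map (algebraMap ℝ ℍ)
  have hc : ∀ P, Commute c P := commute_map_algebraMap n
  have hcm : c.Monic := hn.map _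
  obtain ⟨E, rfl⟩ := hD
  obtain ⟨F', rfl⟩ := hF
  obtain ⟨F₁, hF₁⟩ := h.exists_mul_eq
  have hE : E.Monic := hcm.of_mul_monic_left h.monic
  have hdeg : E.natDegree < (c * E).natDegree := by
    rw [hcm.natDegree_mul hE, hn.natDegree_map]
    omega
  have hinv : E * (c * F') = F₁ * E := mul_left_cancel₀ hcm.ne_zero <| by
    rw [← mul_assoc, hF₁, ← mul_assoc, ← (hc F₁).eq, mul_assoc]
  obtain ⟨N, Q, hQ⟩ := ih E hdeg ⟨hE, ⟨F₁, hinv⟩,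
    fun v hv => h.eval_eq_zero v (eval_mul_eq_zero_of_eval_eq_zero c hv)⟩
  refine ⟨N + 1, F' * Q, ?_⟩
  rw [pow_succ', hQ, ← mul_assoc, mul_assoc c, (hc _).eq, mul_assoc]

theorem exists_pow_eq_mul_of_forall_not_charPoly_dvd {D F : ℍ[X]}
    (h : IsNullstellensatzPair D F) (hD : 0 < D.natDegree) (hnd : ∀ w, ¬charPoly w ∣ D)
    (ih : ∀ E G, E.natDegree < D.natDegree → IsNullstellensatzPair E G → ∃ N Q, G ^ N = Q * E) :
    ∃ N Q, F ^ N = Q * D := by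
  obtain ⟨p, hp⟩ := exists_eval_eq_zero hD
  obtain ⟨D₁, rfl⟩ := exists_eq_mul_X_sub_C_of_eval_eq_zero hp
  obtain ⟨G, rfl⟩ := exists_eq_mul_X_sub_C_of_eval_eq_zero (h.eval_eq_zero p hp)
  obtain ⟨F₁, hF₁⟩ := h.exists_mul_eq
  have hD₁ : D₁.Monic := (monic_X_sub_C p).of_mul_monic_right h.monic
  have hdeg : D₁.natDegree < (D₁ * (X - C p)).natDegree := by
    rw [hD₁.natDegree_mul (monic_X_sub_C p), natDegree_X_sub_C]
    omega
  have hinv : D₁ * ((X - C p) * G) = F₁ * D₁ :=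
    mul_right_cancel₀ (X_sub_C_ne_zero p) (by simpa only [mul_assoc] using hF₁)
  obtain ⟨N, Q, hQ⟩ := ih D₁ ((X - C p) * G) hdeg ⟨hD₁, ⟨F₁, hinv⟩,
    fun w hw => eval_X_sub_C_mul_eq_zero hinv hw h.eval_eq_zero (hnd w)⟩
  refine ⟨N + 1, G * Q, ?_⟩
  rw [pow_succ, ← mul_assoc, mul_pow_mul, hQ]
  simp only [mul_assoc]

theorem exists_pow_eq_mul {D F : ℍ[X]} (h : IsNullstellensatzPair D F) :
    ∃ N Q, F ^ N = Q * D := by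
  induction hd : D.natDegree using Nat.strong_induction_on generalizing D F with
  | _ d ih =>
  have ih' : ∀ E G, E.natDegree < D.natDegree → IsNullstellensatzPair E G →
      ∃ N Q, G ^ N = Q * E := fun E G hE hEG => ih _ (hd ▸ hE) hEG rfl
  by_cases hc : ∃ w, charPoly w ∣ D
  · obtain ⟨w, hw⟩ := hc
    obtain ⟨n, hn, hn0, hnD, hnF⟩ := exists_central_dvd_of_charPoly_dvd hw h.eval_eq_zero
    exact exists_pow_eq_mul_of_central_dvd h hn hn0 hnD hnF fun E => ih' E F
  rcases Nat.eq_zero_or_pos D.natDegree with h0 | hpos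
  · exact ⟨0, 1, by rw [eq_one_of_monic_natDegree_zero h.monic h0, pow_zero, one_mul]⟩
  · exact exists_pow_eq_mul_of_forall_not_charPoly_dvd h hpos (not_exists.mp hc) ih'

theorem exists_pow_eq_sum_of_forall_eval_eq_zero {I : Ideal ℍ[X]} {F : ℍ[X]}
    (hF : ∀ p, (∀ G ∈ I, G.eval p = 0) → F.eval p = 0) :
    ∃ N, 1 ≤ N ∧ ∃ G : Fin (N + 1) → ℍ[X], (∀ m, G m ∈ I) ∧
      F ^ N = ∑ m : Fin (N + 1), G m * F ^ (m : ℕ) := by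
  by_cases hJ : I.mulPowers F = ⊥
  · have hF0 : F = 0 := eq_zero_of_forall_eval_eq_zero fun p => hF p fun G hG => by
      rw [(Submodule.eq_bot_iff _).mp hJ G (Ideal.le_mulPowers hG), eval_zero]
    exact ⟨1, le_rfl, 0, fun _ => I.zero_mem, by simp [hF0]⟩
  obtain ⟨D, hD, hJD⟩ := exists_monic_eq_span hJ
  have hmem : ∀ P, P ∈ I.mulPowers F ↔ ∃ Q, Q * D = P := fun P => by
    rw [hJD, Ideal.mem_span_singleton']
  have hDJ : D ∈ I.mulPowers F := (hmem D).mpr ⟨1, one_mul D⟩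
  obtain ⟨F₁, hF₁⟩ := (hmem _).mp (Ideal.mul_mem_mulPowers hDJ)
  obtain ⟨N₀, Q, hQ⟩ := exists_pow_eq_mul ⟨hD, ⟨F₁, hF₁.symm⟩, fun v hv => hF v fun G hG => by
    obtain ⟨Q, rfl⟩ := (hmem G).mp (Ideal.le_mulPowers hG)
    exact eval_mul_eq_zero_of_eval_eq_zero Q hv⟩
  obtain ⟨c, hc, hcD⟩ := hDJ
  -- `F ^ N = F ^ (N - N₀) * Q * D` is the value at `F` of `C (F ^ (N - N₀) * Q) * c`, whose degree
  -- is at most that of `c`.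
  set N := max N₀ (max 1 c.natDegree)
  have hc' : ∀ k, (C (F ^ (N - N₀) * Q) * c).coeff k ∈ I := fun k => by
    rw [coeff_C_mul]
    exact I.mul_mem_left _ (hc k)
  obtain ⟨G, hG, hsum⟩ := Ideal.exists_eval_eq_sum hc' (N := N) (F := F)
    ((natDegree_C_mul_le _ _).trans (by omega))
  refine ⟨N, by omega, G, hG, ?_⟩
  rw [← hsum, eval_C_mul, hcD, mul_assoc, ← hQ, ← pow_add, Nat.sub_add_cancel (by omega)]

end QuaternionPolynomial

theorem nullstellensatz_quaternions (I : Ideal (Polynomial (Quaternion ℝ)))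
    (F : Polynomial (Quaternion ℝ)) :
    (∀ p : Quaternion ℝ, (∀ G ∈ I, G.eval p = 0) → F.eval p = 0) ↔
    (∀ a : Quaternion ℝ, ∃ N : ℕ, 1 ≤ N ∧
      ∃ G : Fin (N + 1) → Polynomial (Quaternion ℝ), (∀ m, G m ∈ I) ∧
        (C a * F) ^ N = ∑ m : Fin (N + 1), G m * (C a * F) ^ (m : ℕ)) := by
  constructor
  · intro hF a
    exact QuaternionPolynomial.exists_pow_eq_sum_of_forall_eval_eq_zero fun p hp => by
      rw [eval_C_mul, hF p hp, mul_zero]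
  · intro h p hp
    obtain ⟨N, hN, G, hG, hsum⟩ := h (star (F.eval p))
    have hc : Commute ((C (star (F.eval p)) * F).eval p) p := by
      rw [eval_C_mul, Quaternion.star_mul_self]
      exact Quaternion.coe_commute _ p
    have := eval_eq_zero_of_pow_eq_sum hc (by omega) (fun m => hp _ (hG m)) hsum
    rwa [eval_C_mul, mul_eq_zero, star_eq_zero, or_self] at this
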